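/- arXiv:1901.07831 — 6 statements merged into one kernel-verified Lean document; each statement's English description precedes it below -/
import Mathlib

section
/- For positive reals x_1 > x_2 > ... > x_n > 0 and y_1 > y_2 > ... > y_n > 0, the determinant det(2x_i/(π(x_i² + y_j²)))_{i,j=1}^n is strictly positive. -/
/-!
Up to the positive row factors `2 xᵢ / π`, the matrix is the Cauchy matrix `1 / (aᵢ + bⱼ)` with
`aᵢ = xᵢ²` and `bⱼ = yⱼ²`. Subtracting the first row from the others and then a multiple of the
first column from the others clears the first row, and what remains is the Cauchy matrix of the
shorter sequences scaled by the factors `(a₀ - aᵢ) / (aᵢ + b₀)` and `(b₀ - bⱼ) / (a₀ + bⱼ)`, all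
positive for decreasing positive sequences; induction on `n` concludes.
-/

open Real

namespace Matrix

theorem det_succ_eq_mul_det_submatrix_of_row_zero {R : Type*} [CommRing R] {n : ℕ}
    (A : Matrix (Fin (n + 1)) (Fin (n + 1)) R) (hA : ∀ j, j ≠ 0 → A 0 j = 0) :
    A.det = A 0 0 * (A.submatrix Fin.succ Fin.succ).det := by
  rw [det_succ_row_zero, Finset.sum_eq_single 0 (fun j _ hj => by simp [hA j hj]) (by simp)]
  simp [Fin.succAbove_zero]

section Cauchy

variable {K : Type*} [Field K]

theorem cauchy_entry_sub_sub {a a₀ b b₀ : K} (hab : a + b ≠ 0) (ha₀b : a₀ + b ≠ 0)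
    (hab₀ : a + b₀ ≠ 0) (ha₀b₀ : a₀ + b₀ ≠ 0) :
    (a + b)⁻¹ - (a₀ + b)⁻¹ - (a₀ + b₀) / (a₀ + b) * ((a + b₀)⁻¹ - (a₀ + b₀)⁻¹) =
      (a₀ - a) / (a + b₀) * ((b₀ - b) / (a₀ + b) * (a + b)⁻¹) := by
  field_simp
  ring

theorem det_cauchy_succ {n : ℕ} (a b : Fin (n + 1) → K) (h : ∀ i j, a i + b j ≠ 0) :
    (of fun i j => (a i + b j)⁻¹).det =
      (a 0 + b 0)⁻¹ * ((∏ i : Fin n, (a 0 - a i.succ) / (a i.succ + b 0)) *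
        ((∏ j : Fin n, (b 0 - b j.succ) / (a 0 + b j.succ)) *
          (of fun i j : Fin n => (a i.succ + b j.succ)⁻¹).det)) := by
  set rowReduced : Matrix (Fin (n + 1)) (Fin (n + 1)) K :=
    of fun i j => if i = 0 then (a 0 + b j)⁻¹ else (a i + b j)⁻¹ - (a 0 + b j)⁻¹
  set reduced : Matrix (Fin (n + 1)) (Fin (n + 1)) K :=
    of fun i j => rowReduced i j -
      (if j = 0 then 0 else (a 0 + b 0) / (a 0 + b j)) * rowReduced i 0
  have h_rows : (of fun i j => (a i + b j)⁻¹).det = rowReduced.det := by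
    refine det_eq_of_forall_row_eq_smul_add_const (fun i => if i = 0 then 0 else 1) 0
      (if_pos rfl) fun i j => ?_
    by_cases hi : i = 0 <;> simp [rowReduced, hi]
  have h_cols : rowReduced.det = reduced.det := by
    rw [← det_transpose rowReduced, ← det_transpose reduced]
    refine det_eq_of_forall_row_eq_smul_add_const
      (fun j => if j = 0 then 0 else (a 0 + b 0) / (a 0 + b j)) 0 (if_pos rfl) fun j i => ?_
    by_cases hj : j = 0 <;> simp [reduced, hj]
  have h_row_zero : ∀ j, j ≠ 0 → reduced 0 j = 0 := by
    intro j hj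
    have h0j := h 0 j
    have h00 := h 0 0
    simp only [reduced, rowReduced, of_apply, if_pos, if_neg hj]
    field_simp
    ring
  have h_minor : reduced.submatrix Fin.succ Fin.succ =
      of fun i j => (a 0 - a i.succ) / (a i.succ + b 0) *
        (of fun i j => (b 0 - b j.succ) / (a 0 + b j.succ) *
          (of fun i j : Fin n => (a i.succ + b j.succ)⁻¹) i j) i j := by
    ext i j
    simpa [reduced, rowReduced, Fin.succ_ne_zero] using
      cauchy_entry_sub_sub (h _ _) (h _ _) (h _ _) (h 0 0)
  rw [h_rows, h_cols, det_succ_eq_mul_det_submatrix_of_row_zero reduced h_row_zero, h_minor,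
    det_mul_column, det_mul_row]
  simp [reduced, rowReduced]

theorem det_cauchy_pos [LinearOrder K] [IsStrictOrderedRing K] :
    ∀ (n : ℕ) (a b : Fin n → K), StrictAnti a → StrictAnti b → (∀ i, 0 < a i) →
      (∀ j, 0 < b j) → 0 < (of fun i j => (a i + b j)⁻¹).det
  | 0, _, _, _, _, _, _ => by simp
  | n + 1, a, b, ha, hb, ha_pos, hb_pos => by
    have hab : ∀ i j, 0 < a i + b j := fun i j => add_pos (ha_pos i) (hb_pos j)
    rw [det_cauchy_succ a b fun i j => (hab i j).ne']
    have h_minor := det_cauchy_pos n (fun i => a i.succ) (fun j => b j.succ)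
      (ha.comp_strictMono (Fin.strictMono_succ)) (hb.comp_strictMono (Fin.strictMono_succ))
      (fun i => ha_pos _) (fun j => hb_pos _)
    have h_rows : 0 < ∏ i : Fin n, (a 0 - a i.succ) / (a i.succ + b 0) :=
      Finset.prod_pos fun i _ => div_pos (sub_pos.2 (ha (Fin.succ_pos i))) (hab _ _)
    have h_cols : 0 < ∏ j : Fin n, (b 0 - b j.succ) / (a 0 + b j.succ) :=
      Finset.prod_pos fun j _ => div_pos (sub_pos.2 (hb (Fin.succ_pos j))) (hab _ _)
    exact mul_pos (inv_pos.2 (hab 0 0)) (mul_pos h_rows (mul_pos h_cols h_minor))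

end Cauchy

end Matrix

theorem StrictAnti.sq_of_pos {ι R : Type*} [Preorder ι] [Semiring R] [LinearOrder R]
    [IsStrictOrderedRing R] {x : ι → R} (hx : StrictAnti x)
    (hpos : ∀ i, 0 < x i) : StrictAnti fun i => x i ^ 2 :=
  fun _ j hij => pow_lt_pow_left₀ (hx hij) (hpos j).le two_ne_zero

/-- For x_1 > ... > x_n > 0 and y_1 > ... > y_n > 0 the Cauchy-type
determinant det(2x_i/(π(x_i²+y_j²))) is strictly positive. -/
theorem stmt_3 (n : ℕ) (x y : Fin n → ℝ)
    (hx : StrictAnti x) (hxpos : ∀ i, 0 < x i)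
    (hy : StrictAnti y) (hypos : ∀ j, 0 < y j) :
    0 < Matrix.det (Matrix.of fun i j : Fin n =>
        2 * x i / (Real.pi * ((x i) ^ 2 + (y j) ^ 2))) := by
  have h_factor : (Matrix.of fun i j : Fin n => 2 * x i / (π * (x i ^ 2 + y j ^ 2))) =
      Matrix.of fun i j => 2 * x i / π * (Matrix.of fun i j => (x i ^ 2 + y j ^ 2)⁻¹) i j := by
    ext i j
    simp only [Matrix.of_apply]
    field_simp
  rw [h_factor, Matrix.det_mul_column]
  refine mul_pos (Finset.prod_pos fun i _ => by have := hxpos i; positivity) ?_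
  exact Matrix.det_cauchy_pos n _ _ (hx.sq_of_pos hxpos) (hy.sq_of_pos hypos)
    (fun i => pow_pos (hxpos i) 2) (fun j => pow_pos (hypos j) 2)
end

section
/- The determinant det((1/(2t))·sech(π(y_j - x_i)/(2t)))_{i,j=1}^n equals (2t)^{-n} ∏_{i,j} sech(π(y_j - x_i)/(2t)) · ∏_{i<j} sinh(π(x_i - x_j)/(2t)) sinh(π(y_i - y_j)/(2t)). -/
/-!
For a nowhere-vanishing kernel `C` satisfying a three-term relation
`C a' b * C a b' - C a b * C a' b' = S a a' * T b b'`, subtracting `C a₀ b₀ / C aᵢ b₀` times the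
first row of `(C aᵢ bⱼ)⁻¹` from the `i`-th clears the first column, and the relation factors the
remaining minor as `S a₀ aᵢ * T b₀ bⱼ * (C aᵢ b₀ * C a₀ bⱼ * C aᵢ bⱼ)⁻¹`; by induction the
determinant is evaluated exactly as Cauchy's `det (xᵢ + yⱼ)⁻¹`. The hyperbolic kernel
`C a b = cosh (b - a)` satisfies such a relation with `S a a' = sinh (a - a')`,
`T b b' = sinh (b - b')`.
-/

open Real Finset Matrix

theorem Matrix.det_mul_row_mul_column {R ι : Type*} [CommRing R] [Fintype ι] [DecidableEq ι]
    (u v : ι → R) (A : ι → ι → R) :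
    det (of fun i j => u i * v j * A i j) = (∏ i, u i) * (∏ j, v j) * det (of A) := by
  rw [mul_assoc, ← det_mul_row v, ← det_mul_column]
  simp only [of_apply, mul_assoc]

section KernelDeterminant

variable {F α β : Type*} [Field F] (C : α → β → F) (S : α → α → F) (T : β → β → F)

theorem det_inv_kernel_succ (hC : ∀ a b, C a b ≠ 0)
    (hCST : ∀ a a' b b', C a' b * C a b' - C a b * C a' b' = S a a' * T b b')
    {n : ℕ} (x : Fin (n + 1) → α) (y : Fin (n + 1) → β) :
    det (of fun i j => (C (x i) (y j))⁻¹) =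
      (C (x 0) (y 0))⁻¹ * (∏ i : Fin n, S (x 0) (x i.succ) * (C (x i.succ) (y 0))⁻¹) *
        (∏ j : Fin n, T (y 0) (y j.succ) * (C (x 0) (y j.succ))⁻¹) *
        det (of fun i j : Fin n => (C (x i.succ) (y j.succ))⁻¹) := by
  set B : Matrix (Fin (n + 1)) (Fin (n + 1)) F := of fun i j =>
    if i = 0 then (C (x 0) (y j))⁻¹ else
      (C (x i) (y j))⁻¹ - C (x 0) (y 0) / C (x i) (y 0) * (C (x 0) (y j))⁻¹ with hB
  have row_op : det (of fun i j => (C (x i) (y j))⁻¹) = det B :=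
    det_eq_of_forall_row_eq_smul_add_const
      (fun i => if i = 0 then 0 else C (x 0) (y 0) / C (x i) (y 0)) 0 (if_pos rfl)
      fun i j => by by_cases hi : i = 0 <;> simp [hB, hi]
  have col_zero (i : Fin n) : B i.succ 0 = 0 := by
    simp only [hB, of_apply, if_neg (Fin.succ_ne_zero _)]
    field_simp [hC]
    ring
  have minor : B.submatrix Fin.succ Fin.succ = of fun i j =>
      S (x 0) (x i.succ) * (C (x i.succ) (y 0))⁻¹ *
        (T (y 0) (y j.succ) * (C (x 0) (y j.succ))⁻¹) * (C (x i.succ) (y j.succ))⁻¹ := by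
    ext i j
    simp only [hB, submatrix_apply, of_apply, if_neg (Fin.succ_ne_zero _)]
    field_simp [hC]
    linear_combination hCST (x 0) (x i.succ) (y 0) (y j.succ)
  rw [row_op, det_succ_column_zero, Fin.sum_univ_succ]
  simp only [col_zero, mul_zero, zero_mul, sum_const_zero, add_zero, Fin.succAbove_zero]
  rw [minor, det_mul_row_mul_column]
  simp only [hB, of_apply, ↓reduceIte, Fin.val_zero, pow_zero, one_mul]
  ring

theorem det_inv_kernel (hC : ∀ a b, C a b ≠ 0)
    (hCST : ∀ a a' b b', C a' b * C a b' - C a b * C a' b' = S a a' * T b b') :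
    ∀ {n : ℕ} (x : Fin n → α) (y : Fin n → β),
      det (of fun i j => (C (x i) (y j))⁻¹) =
        (∏ i, ∏ j, (C (x i) (y j))⁻¹) * ∏ i, ∏ j ∈ Ioi i, S (x i) (x j) * T (y i) (y j)
  | 0, _, _ => by simp
  | n + 1, x, y => by
    rw [det_inv_kernel_succ C S T hC hCST,
      det_inv_kernel hC hCST (fun i => x i.succ) (fun j => y j.succ)]
    simp only [Fin.prod_univ_succ, Fin.prod_Ioi_zero, Fin.prod_Ioi_succ, prod_mul_distrib]
    ring

end KernelDeterminant

theorem Real.cosh_sub_mul_cosh_sub_sub_cosh_sub_mul_cosh_sub (a a' b b' : ℝ) :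
    cosh (b - a') * cosh (b' - a) - cosh (b - a) * cosh (b' - a') =
      sinh (a - a') * sinh (b - b') := by
  simp only [cosh_sub, sinh_sub]
  ring

theorem Real.det_inv_cosh_sub {n : ℕ} (a b : Fin n → ℝ) :
    det (of fun i j => (cosh (b j - a i))⁻¹) =
      (∏ i, ∏ j, (cosh (b j - a i))⁻¹) *
        ∏ i, ∏ j ∈ Ioi i, sinh (a i - a j) * sinh (b i - b j) :=
  det_inv_kernel (fun a b => cosh (b - a)) (fun a a' => sinh (a - a'))
    (fun b b' => sinh (b - b')) (fun _ _ => (cosh_pos _).ne')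
    cosh_sub_mul_cosh_sub_sub_cosh_sub_mul_cosh_sub a b

theorem stmt_5_general (n : ℕ) (t : ℝ) (x y : Fin n → ℝ) :
    Matrix.det (Matrix.of fun i j : Fin n =>
        (1 / (2 * t)) * (Real.cosh (Real.pi * (y j - x i) / (2 * t)))⁻¹) =
      (2 * t) ^ (-(n : ℤ)) *
        (∏ i, ∏ j, (Real.cosh (Real.pi * (y j - x i) / (2 * t)))⁻¹) *
        ∏ i, ∏ j ∈ Finset.univ.filter (fun j => i < j),
          (Real.sinh (Real.pi * (x i - x j) / (2 * t)) *
            Real.sinh (Real.pi * (y i - y j) / (2 * t))) := by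
  have h_arg (u v : ℝ) : π * (v - u) / (2 * t) = π * v / (2 * t) - π * u / (2 * t) := by ring
  have h_scale : (of fun i j : Fin n =>
      (1 / (2 * t)) * (cosh (π * y j / (2 * t) - π * x i / (2 * t)))⁻¹) =
      (1 / (2 * t)) • of fun i j => (cosh (π * y j / (2 * t) - π * x i / (2 * t)))⁻¹ := rfl
  simp only [h_arg, filter_lt_eq_Ioi]
  rw [h_scale, det_smul, Real.det_inv_cosh_sub, Fintype.card_fin, _root_.zpow_neg, zpow_natCast,
    one_div, inv_pow, mul_assoc]

/-- Determinant evaluation for the strip hitting density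
h_t(x,y) = (1/(2t))·sech(π(y-x)/(2t)). -/
theorem stmt_5 (n : ℕ) (t : ℝ) (ht : 0 < t) (x y : Fin n → ℝ) :
    Matrix.det (Matrix.of fun i j : Fin n =>
        (1 / (2 * t)) * (Real.cosh (Real.pi * (y j - x i) / (2 * t)))⁻¹) =
      (2 * t) ^ (-(n : ℤ)) *
        (∏ i, ∏ j, (Real.cosh (Real.pi * (y j - x i) / (2 * t)))⁻¹) *
        ∏ i, ∏ j ∈ Finset.univ.filter (fun j => i < j),
          (Real.sinh (Real.pi * (x i - x j) / (2 * t)) *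
            Real.sinh (Real.pi * (y i - y j) / (2 * t))) :=
  stmt_5_general n t x y
end

section
/- The determinant det((1/π)·(1-x_i²)/(1 - 2x_i cos θ_j + x_i²))_{i,j=1}^n equals π^{-n} ∏_i (1-x_i²) · ∏_{i<j}(x_i - x_j)(1 - x_i x_j) · ∏_{i,j}(1 - 2x_i cos θ_j + x_i²)^{-1} · ∏_{i<j} 2(cos θ_i - cos θ_j). -/
/-!
Since `1 - 2 x cos θ + x² = (1 + x²) - 2x · cos θ`, the matrix is a homogeneous Cauchy matrix
`(p i - s i * v j)⁻¹` with `p = 1 + x²`, `s = 2x`, `v = cos θ`, with row `i` scaled by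
`(1 - x i ²) / π`, and `p i * s j - p j * s i = 2 (x j - x i) (1 - x i x j)`.
The Cauchy determinant follows by induction on `n`, pivoting on the `(0, 0)` entry: the Schur
complement of a Cauchy matrix is again a Cauchy matrix, with rows and columns rescaled.
The denominators do not vanish because `1 - 2 x cos θ + x² = (x - cos θ)² + sin² θ`.
-/

open Real Finset

namespace Matrix

variable {K : Type*} [Field K]

theorem det_succ_eq_mul_det_schur {n : ℕ} (A : Matrix (Fin (n + 1)) (Fin (n + 1)) K)
    (hA : A 0 0 ≠ 0) :
    A.det = A 0 0 *
      det (of fun i j : Fin n => A i.succ j.succ - A i.succ 0 * A 0 j.succ / A 0 0) := by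
  set B : Matrix (Fin (n + 1)) (Fin (n + 1)) K :=
    of fun i j => Fin.cases (A 0 j) (fun i => A i.succ j - A i.succ 0 * A 0 j / A 0 0) i
  have hAB : A.det = B.det := by
    refine det_eq_of_forall_row_eq_smul_add_const (Fin.cons 0 fun i => A i.succ 0 / A 0 0) 0 rfl
      fun i j => ?_
    cases i using Fin.cases
    · simp [B]
    · simp [B]
      ring
  have hB : ∀ i : Fin n, B i.succ 0 = 0 := fun i => by simp [B, hA]
  rw [hAB, det_succ_column_zero, Fin.sum_univ_succ]
  simp only [hB, mul_zero, zero_mul, sum_const_zero, add_zero]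
  simp [B, submatrix]

theorem det_of_row_mul {ι R : Type*} [Fintype ι] [DecidableEq ι] [CommRing R] (a : ι → R)
    (c : ι → ι → R) : det (of fun i j => a i * c i j) = (∏ i, a i) * det (of c) :=
  det_mul_column a (of c)

theorem det_of_col_mul {ι R : Type*} [Fintype ι] [DecidableEq ι] [CommRing R] (b : ι → R)
    (c : ι → ι → R) : det (of fun i j => b j * c i j) = (∏ j, b j) * det (of c) :=
  det_mul_row b (of c)

private theorem cauchy_schur_entry (p₀ s₀ v₀ p s w : K) (h₀ : p₀ - s₀ * w ≠ 0)
    (h0 : p - s * v₀ ≠ 0) (h : p - s * w ≠ 0) :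
    (p - s * w)⁻¹ - (p - s * v₀)⁻¹ * (p₀ - s₀ * w)⁻¹ / (p₀ - s₀ * v₀)⁻¹ =
      (p₀ * s - p * s₀) / (p - s * v₀) * ((w - v₀) / (p₀ - s₀ * w) * (p - s * w)⁻¹) := by
  -- `h₀` in the normal form `field_simp` looks for
  have h₀' : p₀ - w * s₀ ≠ 0 := by rwa [mul_comm]
  rw [div_inv_eq_mul]
  field_simp
  ring

theorem det_of_inv_sub_mul {n : ℕ} (p s v : Fin n → K) (hpsv : ∀ i j, p i - s i * v j ≠ 0) :
    det (of fun i j => (p i - s i * v j)⁻¹) =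
      (∏ i, ∏ j ∈ Ioi i, (p i * s j - p j * s i) * (v j - v i)) /
        ∏ i, ∏ j, (p i - s i * v j) := by
  induction n with
  | zero => simp
  | succ n ih =>
    rw [det_succ_eq_mul_det_schur _ (by simpa using hpsv 0 0)]
    simp only [of_apply]
    have hschur := fun i j : Fin n => cauchy_schur_entry (p 0) (s 0) (v 0) (p i.succ) (s i.succ)
      (v j.succ) (hpsv 0 j.succ) (hpsv i.succ 0) (hpsv i.succ j.succ)
    rw [funext₂ hschur, det_of_row_mul, det_of_col_mul,
      ih (fun i => p i.succ) (fun i => s i.succ) (fun j => v j.succ) fun i j => hpsv i.succ j.succ]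
    simp only [Fin.prod_univ_succ, Fin.prod_Ioi_zero, Fin.prod_Ioi_succ, prod_mul_distrib,
      prod_div_distrib]
    field_simp

end Matrix

theorem Real.one_sub_two_mul_mul_cos_add_sq_pos (x : ℝ) {θ : ℝ} (hθ : sin θ ≠ 0) :
    0 < 1 - 2 * x * cos θ + x ^ 2 := by
  have hsin : 0 < sin θ ^ 2 := by positivity
  nlinarith [sq_nonneg (x - cos θ), sin_sq_add_cos_sq θ]

theorem stmt_7_general (n : ℕ) (x θ : Fin n → ℝ)
    (hθ : ∀ j, θ j ∈ Set.Ioo 0 Real.pi) :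
    Matrix.det (Matrix.of fun i j : Fin n =>
        (1 / Real.pi) * (1 - (x i) ^ 2) / (1 - 2 * x i * Real.cos (θ j) + (x i) ^ 2)) =
      Real.pi ^ (-(n : ℤ)) * (∏ i, (1 - (x i) ^ 2)) *
        (∏ i, ∏ j ∈ Finset.univ.filter (fun j => i < j), ((x i - x j) * (1 - x i * x j))) *
        (∏ i, ∏ j, (1 - 2 * x i * Real.cos (θ j) + (x i) ^ 2))⁻¹ *
        ∏ i, ∏ j ∈ Finset.univ.filter (fun j => i < j),
          (2 * (Real.cos (θ i) - Real.cos (θ j))) := by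
  have hden : ∀ i j, 1 + x i ^ 2 - 2 * x i * cos (θ j) = 1 - 2 * x i * cos (θ j) + x i ^ 2 :=
    fun i j => by ring
  have hden_ne : ∀ i j, 1 + x i ^ 2 - 2 * x i * cos (θ j) ≠ 0 := fun i j => by
    rw [hden]
    exact (one_sub_two_mul_mul_cos_add_sq_pos (x i)
      (sin_pos_of_pos_of_lt_pi (hθ j).1 (hθ j).2).ne').ne'
  have hkernel : (Matrix.of fun i j : Fin n =>
      (1 / π) * (1 - x i ^ 2) / (1 - 2 * x i * cos (θ j) + x i ^ 2)) =
      Matrix.of fun i j => (π⁻¹ * (1 - x i ^ 2)) * (1 + x i ^ 2 - 2 * x i * cos (θ j))⁻¹ := by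
    ext i j
    simp only [Matrix.of_apply]
    ring
  have hpair : ∀ i j, ((1 + x i ^ 2) * (2 * x j) - (1 + x j ^ 2) * (2 * x i)) *
      (cos (θ j) - cos (θ i)) = (x i - x j) * (1 - x i * x j) * (2 * (cos (θ i) - cos (θ j))) :=
    fun i j => by ring
  rw [hkernel, Matrix.det_of_row_mul, Matrix.det_of_inv_sub_mul _ _ _ hden_ne]
  simp only [hpair, hden, filter_lt_eq_Ioi, prod_mul_distrib, Fin.prod_const, zpow_neg,
    zpow_natCast, inv_pow]
  ring

/-- Determinant evaluation for the half-disk Poisson kernel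
h(x,θ) = (1/π)(1-x²)/(1-2x cos θ + x²). -/
theorem stmt_7 (n : ℕ) (x θ : Fin n → ℝ)
    (hx : ∀ i, x i ∈ Set.Ioo (-1 : ℝ) 1) (hθ : ∀ j, θ j ∈ Set.Ioo 0 Real.pi) :
    Matrix.det (Matrix.of fun i j : Fin n =>
        (1 / Real.pi) * (1 - (x i) ^ 2) / (1 - 2 * x i * Real.cos (θ j) + (x i) ^ 2)) =
      Real.pi ^ (-(n : ℤ)) * (∏ i, (1 - (x i) ^ 2)) *
        (∏ i, ∏ j ∈ Finset.univ.filter (fun j => i < j), ((x i - x j) * (1 - x i * x j))) *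
        (∏ i, ∏ j, (1 - 2 * x i * Real.cos (θ j) + (x i) ^ 2))⁻¹ *
        ∏ i, ∏ j ∈ Finset.univ.filter (fun j => i < j),
          (2 * (Real.cos (θ i) - Real.cos (θ j))) :=
  stmt_7_general n x θ hθ
end

section
/- The normalized determinant H̃(x,θ) = H(x,θ)/∫_Θ H(x,θ)dθ, where H(x,θ) = det((1/π)(1-x_i²)/(1-2x_i cos θ_j + x_i²)), converges as x → 0 with -1 < x_n < ... < x_1 < 1 to (1/M) ∏_{i<j} 2(cos θ_i - cos θ_j) = (1/M) ∏_{i<j} |e^{iθ_i} - e^{iθ_j}| · |e^{iθ_i} - e^{-iθ_j}|, pointwise on Θ = {0 < θ_1 < ... < θ_n < π}, with M = ∫_Θ ∏_{i<j} 2(cos θ_i - cos θ_j) dθ. -/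
/-!
Row and column reduction of `det (1 / (1 - 2 x_i c_j + x_i²))`, whose `2 × 2` minors factor as
`(x_0 - x_i)(1 - x_0 x_i) · 2(c_0 - c_j)`, gives a Cauchy-type evaluation. Hence
`det (poissonMatrix x θ) = V(x) · reducedPoissonDet x θ` with `V(x) = ∏_{i<j} (x_i - x_j)`
independent of `θ`, so `V(x)` cancels in the normalisation. `reducedPoissonDet` is jointly
continuous for `|x_i| < 1` and equals `π⁻ⁿ ∏_{i<j} 2(cos θ_i - cos θ_j)` at `x = 0`; since `Θ`
lies in the compact box `[0, π]ⁿ`, dominated convergence passes the limit `x → 0` through the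
integral over `Θ`. The trigonometric form comes from `(u - v)(u - v̄) = u (2 cos a - 2 cos b)`
for `u = e^{ia}`, `v = e^{ib}`.
-/

open Real Finset Filter MeasureTheory Topology Complex

theorem Matrix.det_succ_eq_mul_det_sub_div {K : Type*} [Field K] {n : ℕ}
    (M : Matrix (Fin (n + 1)) (Fin (n + 1)) K) (h : M 0 0 ≠ 0) :
    M.det = M 0 0 *
      (Matrix.of fun i j : Fin n => M i.succ j.succ - M i.succ 0 * M 0 j.succ / M 0 0).det := by
  set c : Fin (n + 1) → K := Fin.cases 0 fun i => M i.succ 0 / M 0 0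
  set B : Matrix (Fin (n + 1)) (Fin (n + 1)) K := Matrix.of fun i j => M i j - c i * M 0 j
  have hB : M.det = B.det := by
    refine Matrix.det_eq_of_forall_row_eq_smul_add_const c 0 rfl fun i j => ?_
    simp [B, c]
  have hB0 : ∀ i : Fin n, B i.succ 0 = 0 := fun i => by
    simp [B, c, h]
  rw [hB, Matrix.det_succ_column_zero, Fin.sum_univ_succ]
  simp only [hB0, mul_zero, zero_mul, Finset.sum_const_zero, add_zero]
  congr 2
  · simp [B, c]
  · ext i j
    simp only [Fin.succAbove_zero, Matrix.submatrix_apply, Matrix.of_apply, Fin.cases_succ,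
      sub_right_inj, B, c]
    ring

theorem Fin.prod_prod_Ioi_succ {M : Type*} [CommMonoid M] {n : ℕ}
    (f : Fin (n + 1) → Fin (n + 1) → M) :
    ∏ i, ∏ j > i, f i j = (∏ j : Fin n, f 0 j.succ) * ∏ i : Fin n, ∏ j > i, f i.succ j.succ := by
  rw [Fin.prod_univ_succ, Fin.prod_Ioi_zero]
  simp_rw [Fin.prod_Ioi_succ]

theorem det_one_div_one_sub_two_mul_add_sq_mul_prod {K : Type*} [Field K] {n : ℕ}
    (x c : Fin n → K) (hQ : ∀ i j, 1 - 2 * x i * c j + x i ^ 2 ≠ 0) :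
    (Matrix.of fun i j => 1 / (1 - 2 * x i * c j + x i ^ 2)).det *
        ∏ i, ∏ j, (1 - 2 * x i * c j + x i ^ 2) =
      ∏ i, ∏ j > i, (x i - x j) * (1 - x i * x j) * (2 * (c i - c j)) := by
  induction n with
  | zero => simp
  | succ n ih =>
    set Q : Fin (n + 1) → Fin (n + 1) → K := fun i j => 1 - 2 * x i * c j + x i ^ 2
    have hQ' : ∀ i j, Q i j ≠ 0 := hQ
    -- the factorisation of the `2 × 2` minors makes the Schur complement of `1 / Q 0 0`
    -- a row and column rescaling of the same matrix one size down
    have minor : ∀ i j, Q i 0 * Q 0 j - Q 0 0 * Q i j =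
        (x 0 - x i) * (1 - x 0 * x i) * (2 * (c 0 - c j)) := fun i j => by ring
    set r : Fin n → K := fun i => (x 0 - x i.succ) * (1 - x 0 * x i.succ) / Q i.succ 0
    set s : Fin n → K := fun j => 2 * (c 0 - c j.succ) / Q 0 j.succ
    set Q' : Matrix (Fin n) (Fin n) K := Matrix.of fun i j => 1 / Q i.succ j.succ
    have schur : (Matrix.of fun i j : Fin n =>
        1 / Q i.succ j.succ - 1 / Q i.succ 0 * (1 / Q 0 j.succ) / (1 / Q 0 0)) =
        Matrix.of fun i j => s j * Matrix.of (fun i j => r i * Q' i j) i j := by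
      ext i j
      have h1 := hQ' i.succ j.succ; have h2 := hQ' i.succ 0
      have h3 := hQ' 0 j.succ; have h4 := hQ' 0 0
      simp only [Matrix.of_apply, r, s, Q']
      field_simp
      linear_combination minor i.succ j.succ
    have hdet : (Matrix.of fun i j => 1 / Q i j).det =
        1 / Q 0 0 * ((∏ j, s j) * ((∏ i, r i) * Q'.det)) := by
      rw [← Matrix.det_mul_column, ← Matrix.det_mul_row, ← schur]
      simpa using
        (Matrix.of fun i j => 1 / Q i j).det_succ_eq_mul_det_sub_div (by simpa using hQ' 0 0)
    calc (Matrix.of fun i j => 1 / Q i j).det * ∏ i, ∏ j, Q i j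
        = (1 / Q 0 0 * ((∏ j, s j) * ((∏ i, r i) * Q'.det))) *
            (Q 0 0 * (∏ j : Fin n, Q 0 j.succ) *
              ∏ i : Fin n, (Q i.succ 0 * ∏ j : Fin n, Q i.succ j.succ)) := by
          rw [hdet]; simp only [Fin.prod_univ_succ]
      _ = (∏ j, s j * Q 0 j.succ) * (∏ i, r i * Q i.succ 0) *
            (Q'.det * ∏ i : Fin n, ∏ j : Fin n, Q i.succ j.succ) := by
          simp only [prod_mul_distrib]
          field_simp [hQ' 0 0]
      _ = (∏ j : Fin n, 2 * (c 0 - c j.succ)) *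
            (∏ i : Fin n, (x 0 - x i.succ) * (1 - x 0 * x i.succ)) *
            ∏ i : Fin n, ∏ j > i,
              (x i.succ - x j.succ) * (1 - x i.succ * x j.succ) * (2 * (c i.succ - c j.succ)) := by
          rw [ih (fun i => x i.succ) (fun j => c j.succ) fun i j => hQ' i.succ j.succ]
          congr 2 <;> refine prod_congr rfl fun k _ => div_mul_cancel₀ _ (hQ' _ _)
      _ = _ := by
          rw [Fin.prod_prod_Ioi_succ, ← prod_mul_distrib]
          congr 1
          exact prod_congr rfl fun k _ => by ring

theorem continuousAt_setIntegral_of_continuousOn_prod {X Y E : Type*} [TopologicalSpace X]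
    [FirstCountableTopology X] [LocallyCompactSpace X] [TopologicalSpace Y] [MeasurableSpace Y]
    [OpensMeasurableSpace Y] [NormedAddCommGroup E] [NormedSpace ℝ E]
    [SecondCountableTopologyEither Y E] {μ : Measure Y} [IsLocallyFiniteMeasure μ]
    {f : X → Y → E} {V : Set X} {K s : Set Y} {x₀ : X} (hV : V ∈ 𝓝 x₀) (hK : IsCompact K)
    (hf : ContinuousOn (Function.uncurry f) (V ×ˢ K)) (hs : MeasurableSet s) (hsK : s ⊆ K) :
    ContinuousAt (fun x => ∫ y in s, f x y ∂μ) x₀ := by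
  obtain ⟨U, hU, hUV, hUc⟩ := local_compact_nhds hV
  obtain ⟨M, hM⟩ := (hUc.prod hK).exists_bound_of_continuousOn
    (hf.mono (Set.prod_mono hUV subset_rfl))
  refine continuousAt_of_dominated (bound := fun _ => M) ?_ ?_
    (integrableOn_const ((measure_mono hsK).trans_lt hK.measure_lt_top).ne) ?_
  · filter_upwards [hU] with x hx
    refine ContinuousOn.aestronglyMeasurable ?_ hs
    exact hf.comp (continuousOn_const.prodMk continuousOn_id) fun y hy => ⟨hUV hx, hsK hy⟩
  · filter_upwards [hU] with x hx
    exact (ae_restrict_iff' hs).mpr (.of_forall fun y hy => hM (x, y) ⟨hx, hsK hy⟩)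
  · refine (ae_restrict_iff' hs).mpr (.of_forall fun y hy => ?_)
    refine (hf.comp (continuousOn_id.prodMk continuousOn_const) fun x hx => ?_).continuousAt hV
    exact ⟨hx, hsK hy⟩

theorem one_sub_two_mul_mul_add_sq_pos {x c : ℝ} (hx : |x| < 1) (hc : |c| ≤ 1) :
    0 < 1 - 2 * x * c + x ^ 2 := by
  have : x * c ≤ |x| := by
    calc x * c ≤ |x * c| := le_abs_self _
      _ = |x| * |c| := abs_mul x c
      _ ≤ |x| := mul_le_of_le_one_right (abs_nonneg x) hc
  nlinarith [sq_abs x, abs_nonneg x]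

theorem two_mul_cos_sub_cos_eq_norm_mul_norm {a b : ℝ} (ha : 0 ≤ a) (hab : a < b)
    (hb : b ≤ π) :
    2 * (Real.cos a - Real.cos b) =
      ‖exp (I * a) - exp (I * b)‖ * ‖exp (I * a) - exp (-I * b)‖ := by
  have hu : exp (a * I) * exp (-(a * I)) = 1 := by rw [← Complex.exp_add]; simp
  have hv : exp (b * I) * exp (-(b * I)) = 1 := by rw [← Complex.exp_add]; simp
  have key : (exp (I * a) - exp (I * b)) * (exp (I * a) - exp (-I * b)) =
      exp (a * I) * ((2 * (Real.cos a - Real.cos b) : ℝ) : ℂ) := by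
    push_cast
    rw [mul_sub 2, Complex.two_cos, Complex.two_cos]
    simp only [mul_comm I, neg_mul]
    linear_combination hv - hu
  have hpos : 0 ≤ 2 * (Real.cos a - Real.cos b) := by
    linarith [Real.cos_lt_cos_of_nonneg_of_le_pi ha hb hab]
  rw [← norm_mul, key, norm_mul, norm_exp_ofReal_mul_I, one_mul, Complex.norm_real,
    Real.norm_of_nonneg hpos]

section

variable {n : ℕ}

noncomputable def poissonMatrix (x θ : Fin n → ℝ) : Matrix (Fin n) (Fin n) ℝ :=
  Matrix.of fun i j => (1 / π) * (1 - x i ^ 2) / (1 - 2 * x i * Real.cos (θ j) + x i ^ 2)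

noncomputable def cosVandermonde (θ : Fin n → ℝ) : ℝ :=
  ∏ i, ∏ j > i, 2 * (Real.cos (θ i) - Real.cos (θ j))

noncomputable def reducedPoissonDet (x θ : Fin n → ℝ) : ℝ :=
  (∏ i, (1 / π) * (1 - x i ^ 2)) * (∏ i, ∏ j > i, (1 - x i * x j)) * cosVandermonde θ /
    ∏ i, ∏ j, (1 - 2 * x i * Real.cos (θ j) + x i ^ 2)

def angleChamber (n : ℕ) : Set (Fin n → ℝ) := {θ | StrictMono θ ∧ ∀ i, θ i ∈ Set.Ioo 0 π}

theorem det_poissonMatrix {x : Fin n → ℝ} (hx : ∀ i, |x i| < 1) (θ : Fin n → ℝ) :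
    (poissonMatrix x θ).det = (∏ i, ∏ j > i, (x i - x j)) * reducedPoissonDet x θ := by
  have hQ : ∀ i j, 1 - 2 * x i * Real.cos (θ j) + x i ^ 2 ≠ 0 := fun i j =>
    (one_sub_two_mul_mul_add_sq_pos (hx i) (Real.abs_cos_le_one _)).ne'
  have hcauchy := eq_div_of_mul_eq
    (prod_ne_zero_iff.mpr fun i _ => prod_ne_zero_iff.mpr fun j _ => hQ i j)
    (det_one_div_one_sub_two_mul_add_sq_mul_prod x (fun j => Real.cos (θ j)) hQ)
  have hrow : poissonMatrix x θ = Matrix.of fun i j => (1 / π) * (1 - x i ^ 2) *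
      Matrix.of (fun i j => 1 / (1 - 2 * x i * Real.cos (θ j) + x i ^ 2)) i j := by
    ext i j
    simp [poissonMatrix, div_eq_mul_inv]
  rw [hrow, Matrix.det_mul_column, hcauchy, reducedPoissonDet, cosVandermonde]
  simp only [prod_mul_distrib]
  ring

theorem det_poissonMatrix_div_setIntegral {x : Fin n → ℝ} (hinj : Function.Injective x)
    (hx : ∀ i, |x i| < 1) (θ : Fin n → ℝ) (s : Set (Fin n → ℝ)) :
    (poissonMatrix x θ).det / ∫ t in s, (poissonMatrix x t).det =
      reducedPoissonDet x θ / ∫ t in s, reducedPoissonDet x t := by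
  have hV : ∏ i, ∏ j > i, (x i - x j) ≠ 0 := prod_ne_zero_iff.mpr fun i _ =>
    prod_ne_zero_iff.mpr fun j hj => sub_ne_zero.mpr (hinj.ne (mem_Ioi.mp hj).ne)
  simp_rw [det_poissonMatrix hx, integral_const_mul, mul_div_mul_left _ _ hV]

theorem reducedPoissonDet_zero (θ : Fin n → ℝ) :
    reducedPoissonDet 0 θ = (1 / π) ^ n * cosVandermonde θ := by
  simp [reducedPoissonDet]

theorem continuous_cosVandermonde : Continuous (cosVandermonde (n := n)) := by
  unfold cosVandermonde
  fun_prop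

theorem continuousOn_reducedPoissonDet :
    ContinuousOn (Function.uncurry (reducedPoissonDet (n := n)))
      (Metric.ball 0 1 ×ˢ Set.univ) := by
  refine ContinuousOn.div (by unfold cosVandermonde; fun_prop) (by fun_prop) ?_
  rintro ⟨x, θ⟩ ⟨hx, -⟩
  rw [mem_ball_zero_iff, pi_norm_lt_iff one_pos] at hx
  exact prod_ne_zero_iff.mpr fun i _ => prod_ne_zero_iff.mpr fun j _ =>
    (one_sub_two_mul_mul_add_sq_pos (by simpa using hx i) (Real.abs_cos_le_one _)).ne'

theorem isOpen_angleChamber : IsOpen (angleChamber n) := by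
  have : angleChamber n = (⋂ (i : Fin n) (j : Fin n) (_ : i < j), {θ | θ i < θ j}) ∩
      ⋂ i, (fun θ => θ i) ⁻¹' Set.Ioo 0 π := by
    ext θ
    simp [angleChamber, StrictMono]
  rw [this]
  exact .inter (isOpen_iInter_of_finite fun i => isOpen_iInter_of_finite fun j =>
    isOpen_iInter_of_finite fun _ => isOpen_lt (continuous_apply i) (continuous_apply j))
    (isOpen_iInter_of_finite fun i => isOpen_Ioo.preimage (continuous_apply i))

theorem angleChamber_subset_Icc : angleChamber n ⊆ Set.Icc 0 (fun _ => π) :=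
  fun _ hθ => ⟨fun i => (hθ.2 i).1.le, fun i => (hθ.2 i).2.le⟩

theorem cosVandermonde_pos {θ : Fin n → ℝ} (hθ : θ ∈ angleChamber n) :
    0 < cosVandermonde θ :=
  prod_pos fun i _ => prod_pos fun j hj => by
    have := Real.cos_lt_cos_of_nonneg_of_le_pi (hθ.2 i).1.le (hθ.2 j).2.le (hθ.1 (mem_Ioi.mp hj))
    linarith

theorem integrableOn_cosVandermonde_angleChamber :
    IntegrableOn cosVandermonde (angleChamber n) :=
  continuous_cosVandermonde.integrableOn_Icc.mono_set angleChamber_subset_Icc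

theorem setIntegral_cosVandermonde_pos (h : (angleChamber n).Nonempty) :
    0 < ∫ θ in angleChamber n, cosVandermonde θ := by
  rw [setIntegral_pos_iff_support_of_nonneg_ae
    ((ae_restrict_iff' isOpen_angleChamber.measurableSet).mpr
      (.of_forall fun θ hθ => (cosVandermonde_pos hθ).le))
    integrableOn_cosVandermonde_angleChamber]
  exact (isOpen_angleChamber.measure_pos volume h).trans_le
    (measure_mono fun θ hθ => ⟨(cosVandermonde_pos hθ).ne', hθ⟩)

theorem tendsto_reducedPoissonDet_div_setIntegral {θ : Fin n → ℝ}
    (hθ : θ ∈ angleChamber n) :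
    Tendsto (fun x => reducedPoissonDet x θ / ∫ t in angleChamber n, reducedPoissonDet x t)
      (𝓝 0) (𝓝 (cosVandermonde θ / ∫ t in angleChamber n, cosVandermonde t)) := by
  have hball : Metric.ball (0 : Fin n → ℝ) 1 ∈ 𝓝 0 := Metric.ball_mem_nhds 0 one_pos
  have hnum : ContinuousAt (fun x => reducedPoissonDet x θ) 0 :=
    (continuousOn_reducedPoissonDet.comp (continuousOn_id.prodMk continuousOn_const)
      fun x hx => ⟨hx, trivial⟩).continuousAt hball
  have hden := continuousAt_setIntegral_of_continuousOn_prod (μ := volume) hball isCompact_Icc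
    (continuousOn_reducedPoissonDet.mono (Set.prod_mono subset_rfl (Set.subset_univ _)))
    isOpen_angleChamber.measurableSet angleChamber_subset_Icc
  have hzero : ∫ t in angleChamber n, reducedPoissonDet 0 t =
      (1 / π) ^ n * ∫ t in angleChamber n, cosVandermonde t := by
    simp_rw [reducedPoissonDet_zero, integral_const_mul]
  have hscale : (1 / π) ^ n ≠ 0 := by positivity
  have := hnum.tendsto.div hden.tendsto
    (by rw [hzero]; exact mul_ne_zero hscale (setIntegral_cosVandermonde_pos ⟨θ, hθ⟩).ne')
  rwa [hzero, reducedPoissonDet_zero, mul_div_mul_left _ _ hscale] at this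

end

/-- The normalized determinant of half-disk Poisson kernels converges, as the
starting points merge to 0, to (1/M)∏_{i<j} 2(cos θ_i - cos θ_j), which equals
(1/M)∏_{i<j} |e^{iθ_i}-e^{iθ_j}|·|e^{iθ_i}-e^{-iθ_j}|. -/
theorem stmt_8 (n : ℕ)
    (N : Set (Fin n → ℝ)) (hN : N = {x : Fin n → ℝ | StrictAnti x ∧ ∀ i, x i ∈ Set.Ioo (-1 : ℝ) 1})
    (Θ : Set (Fin n → ℝ)) (hΘ : Θ = {θ : Fin n → ℝ | StrictMono θ ∧ ∀ i, θ i ∈ Set.Ioo 0 Real.pi})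
    (θ : Fin n → ℝ) (hθ : θ ∈ Θ) :
    Tendsto
      (fun x : Fin n → ℝ =>
        Matrix.det (Matrix.of fun i j : Fin n =>
            (1 / Real.pi) * (1 - (x i) ^ 2) / (1 - 2 * x i * Real.cos (θ j) + (x i) ^ 2)) /
          ∫ θ' in Θ, Matrix.det (Matrix.of fun i j : Fin n =>
            (1 / Real.pi) * (1 - (x i) ^ 2) / (1 - 2 * x i * Real.cos (θ' j) + (x i) ^ 2)))
      (nhdsWithin (fun _ => (0 : ℝ)) N)
      (nhds
        ((∏ i, ∏ j ∈ Finset.univ.filter (fun j => i < j),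
            (2 * (Real.cos (θ i) - Real.cos (θ j)))) /
          ∫ θ' in Θ, ∏ i, ∏ j ∈ Finset.univ.filter (fun j => i < j),
            (2 * (Real.cos (θ' i) - Real.cos (θ' j))))) ∧
    (∏ i, ∏ j ∈ Finset.univ.filter (fun j => i < j),
        (2 * (Real.cos (θ i) - Real.cos (θ j)))) =
      ∏ i, ∏ j ∈ Finset.univ.filter (fun j => i < j),
        (‖Complex.exp (Complex.I * θ i) - Complex.exp (Complex.I * θ j)‖ *
          ‖Complex.exp (Complex.I * θ i) - Complex.exp (-Complex.I * θ j)‖) := by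
  subst hN hΘ
  simp only [filter_lt_eq_Ioi]
  refine ⟨?_, prod_congr rfl fun i _ => prod_congr rfl fun j hj =>
    two_mul_cos_sub_cos_eq_norm_mul_norm (hθ.2 i).1.le (hθ.1 (mem_Ioi.mp hj)) (hθ.2 j).2.le⟩
  refine ((tendsto_reducedPoissonDet_div_setIntegral hθ).mono_left nhdsWithin_le_nhds).congr' ?_
  filter_upwards [self_mem_nhdsWithin] with x ⟨hanti, hx⟩
  exact (det_poissonMatrix_div_setIntegral hanti.injective (fun i => abs_lt.mpr (hx i)) θ _).symm
end

section
/- The determinant of the n×n matrix with entries (1 - 2x_i cos θ_j + x_i²)^{-2} equals the product of the determinant of the matrix with entries (1 - 2x_i cos θ_j + x_i²)^{-1} and the permanent of the same matrix with entries (1 - 2x_i cos θ_j + x_i²)^{-1}. -/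
open Real Finset

/-- The permanent of a square matrix. -/
def permanent {n : ℕ} (M : Matrix (Fin n) (Fin n) ℝ) : ℝ :=
  ∑ σ : Equiv.Perm (Fin n), ∏ i, M i (σ i)

lemma det_col {n : ℕ} (M : Matrix (Fin n) (Fin n) ℝ) :
    M.det = ∑ σ : Equiv.Perm (Fin n), (Equiv.Perm.sign σ : ℝ) * ∏ i, M i (σ i) := by
  rw [← Matrix.det_transpose, Matrix.det_apply']
  simp [Matrix.transpose_apply]

lemma stepA {n : ℕ} (C : Fin n → Fin n → ℝ) :
    Matrix.det (Matrix.of C) * permanent (Matrix.of C)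
      = ∑ ρ : Equiv.Perm (Fin n),
          Matrix.det (Matrix.of fun i j => C i j * C i (ρ j)) := by
  rw [det_col]
  unfold permanent
  simp only [Matrix.of_apply]
  rw [Finset.sum_mul_sum]
  have step1 : ∀ σ τ : Equiv.Perm (Fin n),
      ((Equiv.Perm.sign σ : ℝ) * ∏ i, C i (σ i)) * (∏ i, C i (τ i))
      = (Equiv.Perm.sign σ : ℝ) * ∏ i, C i (σ i) * C i (τ i) := by
    intro σ τ
    rw [Finset.prod_mul_distrib]
    ring
  rw [Finset.sum_congr rfl fun σ _ => Finset.sum_congr rfl fun τ _ => step1 σ τ]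
  have hre : ∀ σ : Equiv.Perm (Fin n),
      (∑ τ : Equiv.Perm (Fin n), (Equiv.Perm.sign σ : ℝ) * ∏ i, C i (σ i) * C i (τ i))
      = ∑ ρ : Equiv.Perm (Fin n),
          (Equiv.Perm.sign σ : ℝ) * ∏ i, C i (σ i) * C i (ρ (σ i)) := by
    intro σ
    exact (Equiv.sum_comp (Equiv.mulRight σ)
      (fun τ => (Equiv.Perm.sign σ : ℝ) * ∏ i, C i (σ i) * C i (τ i))).symm
  rw [Finset.sum_congr rfl fun σ _ => hre σ, Finset.sum_comm]
  refine Finset.sum_congr rfl fun ρ _ => ?_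
  rw [det_col]
  refine Finset.sum_congr rfl fun σ _ => ?_
  simp [Matrix.of_apply]

lemma borchardt_aux {n : ℕ} (α β c : Fin n → ℝ) (hc : Function.Injective c)
    (h : ∀ i j, α i - β i * c j ≠ 0) :
    Matrix.det (Matrix.of fun i j : Fin n => ((α i - β i * c j) ^ 2)⁻¹) =
      Matrix.det (Matrix.of fun i j : Fin n => (α i - β i * c j)⁻¹) *
        permanent (Matrix.of fun i j : Fin n => (α i - β i * c j)⁻¹) := by
  have hC : ∀ (i j : Fin n), True := fun _ _ => trivial
  set C : Fin n → Fin n → ℝ := fun i j => (α i - β i * c j)⁻¹ with hCdef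
  have hdet0 : ∀ ρ : Equiv.Perm (Fin n), ρ ≠ 1 →
      Matrix.det (Matrix.of fun i j => C i j * C i (ρ j)) = 0 := by
    intro ρ hρ
    refine Matrix.exists_mulVec_eq_zero_iff.mp ⟨fun j => c j - c (ρ j), ?_, ?_⟩
    · intro h0
      apply hρ
      refine Equiv.ext fun j => ?_
      have := congrFun h0 j
      simp only [Pi.zero_apply, sub_eq_zero] at this
      exact hc this.symm
    · funext i
      show ∑ j, (Matrix.of fun i j => C i j * C i (ρ j)) i j * (c j - c (ρ j)) = 0
      simp only [Matrix.of_apply]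
      by_cases hβ : β i = 0
      · have e : ∀ j, C i j * C i (ρ j) * (c j - c (ρ j))
            = ((α i)⁻¹ * (α i)⁻¹) * (c j - c (ρ j)) := by
          intro j; simp [hCdef, hβ]
        rw [Finset.sum_congr rfl fun j _ => e j, ← Finset.mul_sum,
          Finset.sum_sub_distrib, Equiv.sum_comp ρ (fun j => c j), sub_self, mul_zero]
      · have e : ∀ j, C i j * C i (ρ j) * (c j - c (ρ j))
            = (β i)⁻¹ * (C i j - C i (ρ j)) := by
          intro j
          have h1 := h i j
          have h2 := h i (ρ j)
          simp only [hCdef]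
          field_simp
          ring
        rw [Finset.sum_congr rfl fun j _ => e j, ← Finset.mul_sum,
          Finset.sum_sub_distrib, Equiv.sum_comp ρ (fun j => C i j), sub_self, mul_zero]
  have hA := stepA C
  rw [hA, Finset.sum_eq_single 1]
  · congr 1
    ext i j
    simp [hCdef, sq, mul_inv]
  · intro ρ _ hρ
    exact hdet0 ρ hρ
  · intro habs
    exact absurd (Finset.mem_univ _) habs

/-- Borchardt/Carlitz-Levine identity: the determinant of the matrix with
entries (1-2x_i cos θ_j+x_i²)^{-2} equals the determinant times the permanent
of the matrix with entries (1-2x_i cos θ_j+x_i²)^{-1}. -/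
theorem stmt_10 (n : ℕ) (x θ : Fin n → ℝ)
    (hx : ∀ i, x i ∈ Set.Ioo (-1 : ℝ) 1) (hθ : ∀ j, θ j ∈ Set.Ioo 0 Real.pi) :
    Matrix.det (Matrix.of fun i j : Fin n =>
        ((1 - 2 * x i * Real.cos (θ j) + (x i) ^ 2) ^ 2)⁻¹) =
      Matrix.det (Matrix.of fun i j : Fin n =>
          (1 - 2 * x i * Real.cos (θ j) + (x i) ^ 2)⁻¹) *
        permanent (Matrix.of fun i j : Fin n =>
          (1 - 2 * x i * Real.cos (θ j) + (x i) ^ 2)⁻¹) := by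
  by_cases hinj : Function.Injective θ
  · have hcos : ∀ j, Real.cos (θ j) ∈ Set.Ioo (-1 : ℝ) 1 := by
      intro j
      obtain ⟨h1, h2⟩ := hθ j
      constructor
      · have := Real.strictAntiOn_cos ⟨h1.le, h2.le⟩ ⟨Real.pi_pos.le, le_refl π⟩ h2
        simpa [Real.cos_pi] using this
      · have := Real.strictAntiOn_cos ⟨le_refl (0:ℝ), Real.pi_pos.le⟩ ⟨h1.le, h2.le⟩ h1
        simpa [Real.cos_zero] using this
    have hcinj : Function.Injective fun j => Real.cos (θ j) := by
      intro j k hjk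
      refine hinj (Real.injOn_cos ⟨(hθ j).1.le, (hθ j).2.le⟩ ⟨(hθ k).1.le, (hθ k).2.le⟩ hjk)
    have hne : ∀ i j, (1 + x i ^ 2) - (2 * x i) * Real.cos (θ j) ≠ 0 := by
      intro i j
      obtain ⟨ha, hb⟩ := hcos j
      nlinarith [sq_nonneg (x i - Real.cos (θ j))]
    have key := borchardt_aux (fun i => 1 + x i ^ 2) (fun i => 2 * x i)
      (fun j => Real.cos (θ j)) hcinj hne
    have e1 : ∀ i j, 1 - 2 * x i * Real.cos (θ j) + (x i) ^ 2
        = (1 + x i ^ 2) - (2 * x i) * Real.cos (θ j) := by intro i j; ring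
    simp only [e1]
    exact key
  · rw [Function.not_injective_iff] at hinj
    obtain ⟨j, k, hjk, hne⟩ := hinj
    have z1 : Matrix.det (Matrix.of fun i j : Fin n =>
        ((1 - 2 * x i * Real.cos (θ j) + (x i) ^ 2) ^ 2)⁻¹) = 0 :=
      Matrix.det_zero_of_column_eq hne (fun i => by simp [hjk])
    have z2 : Matrix.det (Matrix.of fun i j : Fin n =>
        (1 - 2 * x i * Real.cos (θ j) + (x i) ^ 2)⁻¹) = 0 :=
      Matrix.det_zero_of_column_eq hne (fun i => by simp [hjk])
    rw [z1, z2, zero_mul]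
end

section
/- Over all strictly increasing sequences of integers k_1 < k_2 < ... < k_n, the minimum of Σ_{i=1}^n |x + k_i| (with x = 0 for n odd, x = 1/2 for n even) equals (n² - [n])/4, where [n] = 1 if n is odd and 0 if n is even, and is attained uniquely at x + k_i' = i - (n+1)/2. -/
open Finset


lemma gapN {n : ℕ} {k : Fin n → ℤ} (hk : StrictMono k) :
    ∀ d : ℕ, ∀ i j : Fin n, (j : ℕ) = (i : ℕ) + d → k i + d ≤ k j := by
  intro d
  induction d with
  | zero => intro i j h; have : i = j := Fin.ext (by omega); simp [this]
  | succ d ih =>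
    intro i j h
    have hj' : (i : ℕ) + d < n := by omega
    have h1 := ih i ⟨(i : ℕ) + d, hj'⟩ rfl
    have h2 : k ⟨(i : ℕ) + d, hj'⟩ < k j := hk (by simp [Fin.lt_def]; omega)
    push_cast
    omega

lemma gap {n : ℕ} {k : Fin n → ℤ} (hk : StrictMono k) (i j : Fin n) (h : (i:ℕ) ≤ (j:ℕ)) :
    ((j:ℕ) : ℝ) - (i:ℕ) ≤ (k j : ℝ) - (k i : ℝ) := by
  have h1 := gapN hk ((j:ℕ) - (i:ℕ)) i j (by omega)
  have h2 : k i + (((j:ℕ):ℤ) - ((i:ℕ):ℤ)) ≤ k j := by push_cast at h1 ⊢; omega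
  have h3 : ((k i : ℝ)) + (((j:ℕ):ℝ) - ((i:ℕ):ℝ)) ≤ (k j : ℝ) := by exact_mod_cast h2
  linarith

lemma revcast {n : ℕ} (i : Fin n) : ((i.rev : ℕ):ℝ) = (n:ℝ) - 1 - ((i:ℕ):ℝ) := by
  have hi := i.isLt
  have h : (i.rev : ℕ) = n - 1 - (i:ℕ) := by rw [Fin.val_rev]; omega
  rw [h, Nat.cast_sub (by omega), Nat.cast_sub (by omega)]
  push_cast; ring

lemma pairKey {n : ℕ} {k : Fin n → ℤ} (hk : StrictMono k) (x : ℝ) (i : Fin n) :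
    |(n:ℝ) - 1 - 2*((i:ℕ):ℝ)| ≤ |x + (k i : ℝ)| + |x + (k i.rev : ℝ)| := by
  have hi := i.isLt
  have hrev : (i.rev : ℕ) = n - 1 - (i:ℕ) := by rw [Fin.val_rev]; omega
  have h3 := revcast i
  rcases le_or_gt (2*(i:ℕ)+1) n with h | h
  · have h1 : (i:ℕ) ≤ (i.rev:ℕ) := by omega
    have h2 := gap hk i i.rev h1
    have h4 : (0:ℝ) ≤ (n:ℝ) - 1 - 2*((i:ℕ):ℝ) := by
      have : ((2*(i:ℕ)+1 : ℕ):ℝ) ≤ ((n:ℕ):ℝ) := Nat.cast_le.2 h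
      push_cast at this; linarith
    rw [abs_of_nonneg h4]
    have h5 := le_abs_self (x + (k i.rev:ℝ))
    have h6 := neg_abs_le (x + (k i:ℝ))
    linarith
  · have h1 : (i.rev:ℕ) ≤ (i:ℕ) := by omega
    have h2 := gap hk i.rev i h1
    have h4 : (n:ℝ) - 1 - 2*((i:ℕ):ℝ) ≤ 0 := by
      have : ((n:ℕ):ℝ) ≤ ((2*(i:ℕ)+1 : ℕ):ℝ) := Nat.cast_le.2 (by omega)
      push_cast at this; linarith
    rw [abs_of_nonpos h4]
    have h5 := le_abs_self (x + (k i:ℝ))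
    have h6 := neg_abs_le (x + (k i.rev:ℝ))
    linarith

lemma pairEq {n : ℕ} {k : Fin n → ℤ} (hk : StrictMono k) (x : ℝ) (i : Fin n)
    (h1 : 2*(i:ℕ) + 1 ≤ n)
    (hT : |(n:ℝ) - 1 - 2*((i:ℕ):ℝ)| = |x + (k i : ℝ)| + |x + (k i.rev : ℝ)|) :
    (k i.rev : ℝ) - (k i : ℝ) = (n:ℝ) - 1 - 2*((i:ℕ):ℝ) ∧
      x + (k i : ℝ) ≤ 0 ∧ 0 ≤ x + (k i.rev : ℝ) := by
  have hi := i.isLt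
  have hrev : (i.rev : ℕ) = n - 1 - (i:ℕ) := by rw [Fin.val_rev]; omega
  have h3 := revcast i
  have h2 := gap hk i i.rev (by omega)
  have h4 : (0:ℝ) ≤ (n:ℝ) - 1 - 2*((i:ℕ):ℝ) := by
    have : ((2*(i:ℕ)+1 : ℕ):ℝ) ≤ ((n:ℕ):ℝ) := Nat.cast_le.2 h1
    push_cast at this; linarith
  rw [abs_of_nonneg h4] at hT
  have h5 := le_abs_self (x + (k i.rev:ℝ))
  have h6 := neg_abs_le (x + (k i:ℝ))
  have h7 := le_abs_self (x + (k i:ℝ))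
  have h8 := neg_abs_le (x + (k i.rev:ℝ))
  have habs1 := abs_nonneg (x + (k i:ℝ))
  have habs2 := abs_nonneg (x + (k i.rev:ℝ))
  refine ⟨by linarith, by linarith, by linarith⟩

lemma sumAbs : ∀ n : ℕ, ∑ i ∈ Finset.range n, |(n:ℝ) - 1 - 2*i| =
    ((n:ℝ)^2 - (if Odd n then 1 else 0))/2
  | 0 => by simp
  | 1 => by norm_num
  | (n+2) => by
    have ih := sumAbs n
    rw [Finset.sum_range_succ, Finset.sum_range_succ']
    have h1 : ∀ i ∈ Finset.range n,
        |((n+2:ℕ):ℝ) - 1 - 2*((i+1:ℕ):ℝ)| = |(n:ℝ) - 1 - 2*(i:ℝ)| := by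
      intro i _; push_cast; ring_nf
    rw [Finset.sum_congr rfl h1, ih]
    have hodd : (if Odd (n+2) then (1:ℝ) else 0) = (if Odd n then (1:ℝ) else 0) := by
      have : Odd (n+2) ↔ Odd n := by simp [Nat.odd_add]
      simp [this]
    rw [hodd]
    have hn2 : |((n+2:ℕ):ℝ) - 1 - 2*((n+1:ℕ):ℝ)| = (n:ℝ)+1 := by
      push_cast; rw [abs_of_nonpos (by linarith)]; ring
    have hn0 : |((n+2:ℕ):ℝ) - 1 - 2*((0:ℕ):ℝ)| = (n:ℝ)+1 := by
      push_cast; rw [abs_of_nonneg (by linarith)]; ring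
    rw [hn2, hn0]
    push_cast
    ring

lemma targetSum (n : ℕ) :
    ∑ i : Fin n, |((i:ℕ):ℝ) + 1 - ((n:ℝ)+1)/2| =
    ((n:ℝ)^2 - (if Odd n then 1 else 0))/4 := by
  rw [Fin.sum_univ_eq_sum_range (fun i => |((i:ℕ):ℝ) + 1 - ((n:ℝ)+1)/2|)]
  have h : ∀ i ∈ Finset.range n,
      |((i:ℕ):ℝ) + 1 - ((n:ℝ)+1)/2| = |(n:ℝ) - 1 - 2*i|/2 := by
    intro i _
    have e : ((i:ℕ):ℝ) + 1 - ((n:ℝ)+1)/2 = -(((n:ℝ) - 1 - 2*i))/2 := by ring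
    rw [e, abs_div, abs_neg, abs_two]
  rw [Finset.sum_congr rfl h, ← Finset.sum_div, sumAbs n]
  ring

/-- Over all strictly increasing integer sequences k_1 < ... < k_n, the minimum
of Σ|x+k_i| (x = 0 for n odd, x = 1/2 for n even) equals (n²-[n])/4 with
[n] = 1 for n odd, 0 for n even, attained uniquely at x+k_i = i-(n+1)/2. -/
theorem stmt_12 (n : ℕ) (hn : 1 ≤ n) (x : ℝ) (hx : x = if Odd n then 0 else 1 / 2) :
    (∀ k : Fin n → ℤ, StrictMono k →
        ((n : ℝ) ^ 2 - (if Odd n then 1 else 0)) / 4 ≤ ∑ i, |x + (k i : ℝ)|) ∧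
    (∀ k : Fin n → ℤ, StrictMono k →
        (∑ i, |x + (k i : ℝ)| = ((n : ℝ) ^ 2 - (if Odd n then 1 else 0)) / 4 ↔
          ∀ i : Fin n, x + (k i : ℝ) = ((i : ℕ) : ℝ) + 1 - ((n : ℝ) + 1) / 2)) := by
  have hFinSum : ∑ i : Fin n, |(n:ℝ) - 1 - 2*((i:ℕ):ℝ)| =
      ((n:ℝ)^2 - (if Odd n then 1 else 0))/2 := by
    rw [Fin.sum_univ_eq_sum_range (fun i => |(n:ℝ) - 1 - 2*((i:ℕ):ℝ)|)]
    exact sumAbs n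
  have main : ∀ k : Fin n → ℤ, StrictMono k →
      ∑ i : Fin n, (|x + (k i : ℝ)| + |x + (k i.rev : ℝ)|) = 2 * ∑ i, |x + (k i : ℝ)| := by
    intro k hk
    rw [Finset.sum_add_distrib]
    have hrevsum : ∑ i : Fin n, |x + (k i.rev : ℝ)| = ∑ i : Fin n, |x + (k i : ℝ)| :=
      Fintype.sum_bijective Fin.rev (Fin.rev_involutive.bijective)
        (fun i => |x + (k i.rev : ℝ)|) (fun i => |x + (k i : ℝ)|) (fun i => rfl)
    rw [hrevsum]; ring
  have lower : ∀ k : Fin n → ℤ, StrictMono k →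
      ((n : ℝ) ^ 2 - (if Odd n then 1 else 0)) / 4 ≤ ∑ i, |x + (k i : ℝ)| := by
    intro k hk
    have h2 : ∑ i : Fin n, |(n:ℝ) - 1 - 2*((i:ℕ):ℝ)| ≤
        ∑ i : Fin n, (|x + (k i : ℝ)| + |x + (k i.rev : ℝ)|) :=
      Finset.sum_le_sum (fun i _ => pairKey hk x i)
    rw [hFinSum, main k hk] at h2
    linarith
  refine ⟨lower, ?_⟩
  intro k hk
  constructor
  · -- forward: equality implies the explicit form
    intro heq
    have h3 : ∑ i : Fin n, (|x + (k i : ℝ)| + |x + (k i.rev : ℝ)|) =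
        ((n:ℝ)^2 - (if Odd n then 1 else 0))/2 := by
      rw [main k hk, heq]; ring
    have hTz : ∀ i ∈ Finset.univ (α := Fin n),
        |(n:ℝ) - 1 - 2*((i:ℕ):ℝ)| = |x + (k i : ℝ)| + |x + (k i.rev : ℝ)| := by
      rw [← Finset.sum_eq_sum_iff_of_le (fun i _ => pairKey hk x i)]
      rw [hFinSum, h3]
    -- step A: k is an arithmetic progression
    set i0 : Fin n := ⟨0, by omega⟩ with hi0
    have hi0v : (i0 : ℕ) = 0 := rfl
    have hrev0 : ((i0.rev : ℕ):ℝ) = (n:ℝ) - 1 := by rw [revcast i0, hi0v]; norm_num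
    have hA : (k i0.rev : ℝ) - (k i0 : ℝ) = (n:ℝ) - 1 := by
      rcases Nat.lt_or_ge 1 n with h | h
      · have := (pairEq hk x i0 (by omega) (hTz i0 (Finset.mem_univ _))).1
        rw [hi0v] at this; push_cast at this; linarith
      · have hn1 : n = 1 := by omega
        have : i0.rev = i0 := Fin.ext (by rw [Fin.val_rev]; omega)
        rw [this]; subst hn1; norm_num
    have hlin : ∀ j : Fin n, (k j : ℝ) = (k i0 : ℝ) + ((j:ℕ):ℝ) := by
      intro j
      have g1 := gap hk i0 j (by omega)
      have g2 := gap hk j i0.rev (by rw [Fin.val_rev]; omega)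
      rw [hi0v] at g1
      rw [hrev0] at g2
      push_cast at g1
      linarith
    -- step B: pin down k i0 by parity
    rcases Nat.even_or_odd n with hev | hodd
    · -- even case
      obtain ⟨m, hm⟩ := hev
      have hm1 : 1 ≤ m := by omega
      have hnotodd : ¬ Odd n := by simp [hm, Nat.odd_iff]; omega
      have hxv : x = 1/2 := by rw [hx, if_neg hnotodd]
      set ia : Fin n := ⟨m - 1, by omega⟩ with hia
      have hiav : (ia : ℕ) = m - 1 := rfl
      have hiarev : (ia.rev : ℕ) = m := by rw [Fin.val_rev]; omega
      obtain ⟨-, hsa, hsb⟩ := pairEq hk x ia (by omega) (hTz ia (Finset.mem_univ _))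
      rw [hlin ia] at hsa
      rw [hlin ia.rev] at hsb
      have hiacast : ((ia:ℕ):ℝ) = (m:ℝ) - 1 := by
        rw [hiav, Nat.cast_sub hm1]; norm_num
      have hiarevcast : ((ia.rev:ℕ):ℝ) = (m:ℝ) := by rw [hiarev]
      rw [hiacast] at hsa
      rw [hiarevcast] at hsb
      -- k i0 + m ∈ [-1/2, 1/2] so k i0 = -m
      have hc : k i0 + (m:ℤ) = 0 := by
        have h1 : ((k i0 + (m:ℤ) : ℤ) : ℝ) ≤ 1/2 := by push_cast; linarith [hxv ▸ hsa]
        have h2 : (-(1/2) : ℝ) ≤ ((k i0 + (m:ℤ) : ℤ) : ℝ) := by push_cast; linarith [hxv ▸ hsb]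
        have h3 : ((k i0 + (m:ℤ) : ℤ) : ℝ) < 1 := by linarith
        have h4 : ((-1 : ℤ) : ℝ) < ((k i0 + (m:ℤ) : ℤ) : ℝ) := by push_cast; linarith
        have h3' : (k i0 + (m:ℤ)) < 1 := by exact_mod_cast h3
        have h4' : (-1 : ℤ) < k i0 + (m:ℤ) := by exact_mod_cast h4
        omega
      have hk0 : (k i0 : ℝ) = -(m:ℝ) := by
        have : ((k i0 + (m:ℤ) : ℤ) : ℝ) = 0 := by exact_mod_cast hc
        push_cast at this; linarith
      intro i
      rw [hlin i, hk0, hxv]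
      have hncast : (n:ℝ) = 2*(m:ℝ) := by rw [hm]; push_cast; ring
      rw [hncast]; ring
    · -- odd case
      obtain ⟨m, hm⟩ := hodd
      have hxv : x = 0 := by rw [hx, if_pos ⟨m, hm⟩]
      set im : Fin n := ⟨m, by omega⟩ with him
      have himrev : im.rev = im := Fin.ext (by rw [Fin.val_rev]; simp [him]; omega)
      have hT := hTz im (Finset.mem_univ _)
      rw [himrev] at hT
      have himcast : ((im:ℕ):ℝ) = (m:ℝ) := rfl
      have hncast : (n:ℝ) = 2*(m:ℝ) + 1 := by rw [hm]; push_cast; ring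
      rw [himcast, hncast] at hT
      have h0 : |2*(m:ℝ) + 1 - 1 - 2*(m:ℝ)| = 0 := by norm_num
      rw [h0] at hT
      have hym : x + (k im : ℝ) = 0 := by
        have := abs_nonneg (x + (k im : ℝ))
        have := abs_eq_zero.mp (by linarith : |x + (k im:ℝ)| = 0)
        exact this
      rw [hlin im, himcast, hxv] at hym
      have hk0 : (k i0 : ℝ) = -(m:ℝ) := by linarith
      intro i
      rw [hlin i, hk0, hxv, hncast]
      ring
  · -- reverse
    intro hy
    calc ∑ i, |x + (k i : ℝ)| = ∑ i : Fin n, |((i:ℕ):ℝ) + 1 - ((n:ℝ)+1)/2| :=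
          Finset.sum_congr rfl (fun i _ => by rw [hy i])
      _ = ((n : ℝ) ^ 2 - (if Odd n then 1 else 0)) / 4 := targetSum n
end
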